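/- Let P⁺ and P⁻ be finite sets of propositional variables, let M0 and M1 be Kripke models, let w0 be a final world of M0 with cluster C0, and let w1 be a final world of M1 with cluster C1. If (M0,w0) →₁^{(P⁺,P⁻)} (M1,w1), then C0 matches C1. -/

import Mathlib

/-- Modal formulas over countably many variables. -/
inductive ModalForm : Type where
  | var : ℕ → ModalForm
  | bot : ModalForm
  | and : ModalForm → ModalForm → ModalForm
  | or : ModalForm → ModalForm → ModalForm
  | not : ModalForm → ModalForm
  | imp : ModalForm → ModalForm → ModalForm
  | box : ModalForm → ModalForm

namespace ModalForm

mutual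
  /-- positively occurring variables -/
  def vpos : ModalForm → Finset ℕ
    | var p => {p}
    | bot => ∅
    | and φ ψ => vpos φ ∪ vpos ψ
    | or φ ψ => vpos φ ∪ vpos ψ
    | not φ => vneg φ
    | imp φ ψ => vneg φ ∪ vpos ψ
    | box φ => vpos φ
  /-- negatively occurring variables -/
  def vneg : ModalForm → Finset ℕ
    | var _ => ∅
    | bot => ∅
    | and φ ψ => vneg φ ∪ vneg ψ
    | or φ ψ => vneg φ ∪ vneg ψ
    | not φ => vpos φ
    | imp φ ψ => vpos φ ∪ vneg ψ
    | box φ => vneg φ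
end

/-- Modal depth: maximal nesting of `□`. -/
def depth : ModalForm → ℕ
  | var _ => 0
  | bot => 0
  | and φ ψ => max (depth φ) (depth ψ)
  | or φ ψ => max (depth φ) (depth ψ)
  | not φ => depth φ
  | imp φ ψ => max (depth φ) (depth ψ)
  | box φ => depth φ + 1

/-- `◇φ := ¬□¬φ` -/
def dia (φ : ModalForm) : ModalForm := not (box (not φ))

/-- `⊤ := ¬⊥` -/
def top : ModalForm := not bot

end ModalForm

/-- An S4 Kripke frame: nonempty set of worlds with a reflexive transitive relation. -/
structure KFrame : Type 1 where
  W : Type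
  R : W → W → Prop
  nonempty : Nonempty W
  refl : ∀ x, R x x
  trans : ∀ x y z, R x y → R y z → R x z

/-- A Kripke model: a frame with a valuation. -/
structure KModel : Type 1 extends KFrame where
  val : W → ℕ → Prop

/-- The model based on frame `F` with valuation `V`. -/
def KFrame.toModel (F : KFrame) (V : F.W → ℕ → Prop) : KModel :=
  { toKFrame := F, val := V }

/-- Satisfaction in a Kripke model. -/
def KModel.Sat (M : KModel) : M.W → ModalForm → Prop
  | w, .var p => M.val w p
  | _, .bot => False
  | w, .and φ ψ => M.Sat w φ ∧ M.Sat w ψ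
  | w, .or φ ψ => M.Sat w φ ∨ M.Sat w ψ
  | w, .not φ => ¬ M.Sat w φ
  | w, .imp φ ψ => M.Sat w φ → M.Sat w ψ
  | w, .box φ => ∀ y, M.R w y → M.Sat y φ

/-- `(M0,w0) →ₙ^{(P⁺,P⁻)} (M1,w1)`: every `(P⁺,P⁻)`-formula of depth ≤ n
satisfied at `(M0,w0)` is satisfied at `(M1,w1)`. -/
def ModalArrow (Pp Pm : Finset ℕ) (n : ℕ) (M0 : KModel) (w0 : M0.W)
    (M1 : KModel) (w1 : M1.W) : Prop :=
  ∀ φ : ModalForm, φ.vpos ⊆ Pp → φ.vneg ⊆ Pm → φ.depth ≤ n →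
    M0.Sat w0 φ → M1.Sat w1 φ

/-- p-morphism between frames. -/
def PMorphism (F G : KFrame) (f : F.W → G.W) : Prop :=
  (∀ x y, F.R x y → G.R (f x) (f y)) ∧
  (∀ x w, G.R (f x) w → ∃ z, F.R x z ∧ f z = w)

/-- The class `C` of Kripke models enjoys `n`-IP. -/
def EnjoysIP (C : Set KModel) (n : ℕ) : Prop :=
  ∀ (Pp Pm : Finset ℕ) (M0 M1 : KModel), M0 ∈ C → M1 ∈ C →
    ∀ (w0 : M0.W) (w1 : M1.W), ModalArrow Pp Pm n M0 w0 M1 w1 →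
      ∃ (F : KFrame) (wstar : F.W) (f0 : F.W → M0.W) (f1 : F.W → M1.W),
        (∀ V : F.W → ℕ → Prop, F.toModel V ∈ C) ∧
        PMorphism F M0.toKFrame f0 ∧
        PMorphism F M1.toKFrame f1 ∧
        f0 wstar = w0 ∧ f1 wstar = w1 ∧
        ∀ x : F.W, ModalArrow Pp Pm 0 M0 (f0 x) M1 (f1 x)

/-- A world is final iff every successor is also a predecessor. -/
def KModel.Final (M : KModel) (w : M.W) : Prop := ∀ y, M.R w y → M.R y w

/-- The cluster of a world. -/
def KModel.cluster (M : KModel) (w : M.W) : Set M.W := {u | M.R w u ∧ M.R u w}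

/-- Cluster `C0` of `M0` matches cluster `C1` of `M1`. -/
def Matches (Pp Pm : Finset ℕ) (M0 M1 : KModel) (C0 : Set M0.W) (C1 : Set M1.W) : Prop :=
  (∀ u0 ∈ C0, ∃ u1 ∈ C1, ModalArrow Pp Pm 0 M0 u0 M1 u1) ∧
  (∀ u1 ∈ C1, ∃ u0 ∈ C0, ModalArrow Pp Pm 0 M0 u0 M1 u1)

/-- `φ` is satisfied at every world of every model in `C`. -/
def ValidOn (C : Set KModel) (φ : ModalForm) : Prop :=
  ∀ M ∈ C, ∀ w : M.W, M.Sat w φ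

/-!
For finite `Pp`, `Pm`, a single depth-0 `(Pp, Pm)`-formula holds exactly at the worlds above a
given world in the preorder `→₀`, and another exactly at the worlds not below it. If `u0` is in
the cluster of `w0`, then `w0 ⊩ ◇(above u0)`; by `→₁` so does `w1`, and the witness is a
successor of the final world `w1`, hence in its cluster. If no `u0` in the cluster of `w0` were
below `u1 ∈ C1`, then `w0 ⊩ □(not below u1)`, since the successors of the final world `w0` form
its cluster; transferred to `w1`, this fails at `u1` itself.
-/

namespace ModalForm

def conj : List ModalForm → ModalForm
  | [] => top
  | φ :: l => and φ (conj l)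

section Conj

variable {l : List ModalForm} {P : Finset ℕ}

lemma vpos_conj_subset (h : ∀ φ ∈ l, φ.vpos ⊆ P) : (conj l).vpos ⊆ P := by
  induction l with
  | nil => simp [conj, top, vpos, vneg]
  | cons φ l ih => simp_all [conj, vpos, Finset.union_subset_iff]

lemma vneg_conj_subset (h : ∀ φ ∈ l, φ.vneg ⊆ P) : (conj l).vneg ⊆ P := by
  induction l with
  | nil => simp [conj, top, vpos, vneg]
  | cons φ l ih => simp_all [conj, vneg, Finset.union_subset_iff]

lemma depth_conj (h : ∀ φ ∈ l, φ.depth = 0) : (conj l).depth = 0 := by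
  induction l with
  | nil => rfl
  | cons φ l ih => simp_all [conj, depth]

lemma sat_conj_iff (M : KModel) (w : M.W) : M.Sat w (conj l) ↔ ∀ φ ∈ l, M.Sat w φ := by
  induction l with
  | nil => simp [conj, top, KModel.Sat]
  | cons φ l ih => simp [conj, KModel.Sat, ih]

end Conj

noncomputable def litConj (S T : Finset ℕ) : ModalForm :=
  conj (S.toList.map var ++ T.toList.map (not ∘ var))

section LitConj

variable (S T : Finset ℕ)

lemma vpos_litConj_subset : (litConj S T).vpos ⊆ S :=
  vpos_conj_subset <| by simp [or_imp, forall_and, vpos, vneg]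

lemma vneg_litConj_subset : (litConj S T).vneg ⊆ T :=
  vneg_conj_subset <| by simp [or_imp, forall_and, vpos, vneg]

lemma depth_litConj : (litConj S T).depth = 0 :=
  depth_conj <| by simp [or_imp, forall_and, depth]

lemma sat_litConj_iff (M : KModel) (w : M.W) :
    M.Sat w (litConj S T) ↔ (∀ p ∈ S, M.val w p) ∧ ∀ p ∈ T, ¬ M.val w p := by
  simp [litConj, sat_conj_iff, or_imp, forall_and, KModel.Sat]

end LitConj

lemma sat_of_depth_eq_zero {φ : ModalForm} (hd : φ.depth = 0) {M0 M1 : KModel} {u0 : M0.W}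
    {u1 : M1.W} (hpos : ∀ p ∈ φ.vpos, M0.val u0 p → M1.val u1 p)
    (hneg : ∀ p ∈ φ.vneg, M1.val u1 p → M0.val u0 p) (hsat : M0.Sat u0 φ) : M1.Sat u1 φ := by
  induction φ generalizing M0 M1 u0 u1 with
  | var p => exact hpos p (Finset.mem_singleton_self p) hsat
  | bot => exact hsat
  | and φ ψ ihφ ihψ =>
    simp only [depth, Nat.max_eq_zero_iff, vpos, vneg, Finset.mem_union] at *
    exact ⟨ihφ hd.1 (fun p hp => hpos p (.inl hp)) (fun p hp => hneg p (.inl hp)) hsat.1,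
      ihψ hd.2 (fun p hp => hpos p (.inr hp)) (fun p hp => hneg p (.inr hp)) hsat.2⟩
  | or φ ψ ihφ ihψ =>
    simp only [depth, Nat.max_eq_zero_iff, vpos, vneg, Finset.mem_union] at *
    exact hsat.imp (ihφ hd.1 (fun p hp => hpos p (.inl hp)) (fun p hp => hneg p (.inl hp)))
      (ihψ hd.2 (fun p hp => hpos p (.inr hp)) (fun p hp => hneg p (.inr hp)))
  | not φ ih => exact fun h1 => hsat (ih hd hneg hpos h1)
  | imp φ ψ ihφ ihψ =>
    simp only [depth, Nat.max_eq_zero_iff, vpos, vneg, Finset.mem_union] at *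
    exact fun h1 => ihψ hd.2 (fun p hp => hpos p (.inr hp)) (fun p hp => hneg p (.inr hp))
      (hsat (ihφ hd.1 (fun p hp => hneg p (.inl hp)) (fun p hp => hpos p (.inl hp)) h1))
  | box φ _ => simp [depth] at hd

end ModalForm

open ModalForm

lemma modalArrow_zero_iff {Pp Pm : Finset ℕ} {M0 M1 : KModel} {u0 : M0.W} {u1 : M1.W} :
    ModalArrow Pp Pm 0 M0 u0 M1 u1 ↔
      (∀ p ∈ Pp, M0.val u0 p → M1.val u1 p) ∧ ∀ p ∈ Pm, M1.val u1 p → M0.val u0 p := by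
  refine ⟨fun h => ⟨fun p hp => h (var p) (by simpa [vpos]) (by simp [vneg]) le_rfl,
    fun p hp h1 => not_not.1 fun h0 => h (not (var p)) (by simp [vpos, vneg])
      (by simpa [vpos, vneg]) le_rfl h0 h1⟩, ?_⟩
  rintro ⟨hpos, hneg⟩ φ hφp hφn hd
  exact sat_of_depth_eq_zero (Nat.le_zero.1 hd) (fun p hp => hpos p (hφp hp))
    (fun p hp => hneg p (hφn hp))

lemma modalArrow_zero_refl (Pp Pm : Finset ℕ) (M : KModel) (u : M.W) :
    ModalArrow Pp Pm 0 M u M u :=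
  fun _ _ _ _ h => h

section CharacteristicFormulas

open Classical

variable (Pp Pm : Finset ℕ) (M : KModel) (u : M.W)

noncomputable def aboveFormula : ModalForm :=
  litConj (Pp.filter (M.val u ·)) (Pm.filter (¬ M.val u ·))

/-- `¬ aboveFormula` would have the polarities the wrong way round; negating the conjunction of
the opposite literals keeps this a `(Pp, Pm)`-formula. -/
noncomputable def notBelowFormula : ModalForm :=
  not (litConj (Pm.filter (M.val u ·)) (Pp.filter (¬ M.val u ·)))

lemma vpos_aboveFormula_subset : (aboveFormula Pp Pm M u).vpos ⊆ Pp :=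
  (vpos_litConj_subset _ _).trans (Finset.filter_subset _ _)

lemma vneg_aboveFormula_subset : (aboveFormula Pp Pm M u).vneg ⊆ Pm :=
  (vneg_litConj_subset _ _).trans (Finset.filter_subset _ _)

lemma depth_aboveFormula : (aboveFormula Pp Pm M u).depth = 0 :=
  depth_litConj _ _

lemma vpos_notBelowFormula_subset : (notBelowFormula Pp Pm M u).vpos ⊆ Pp :=
  (vneg_litConj_subset _ _).trans (Finset.filter_subset _ _)

lemma vneg_notBelowFormula_subset : (notBelowFormula Pp Pm M u).vneg ⊆ Pm :=
  (vpos_litConj_subset _ _).trans (Finset.filter_subset _ _)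

lemma depth_notBelowFormula : (notBelowFormula Pp Pm M u).depth = 0 :=
  depth_litConj _ _

variable {Pp Pm M u}

lemma sat_aboveFormula_iff {M' : KModel} {v : M'.W} :
    M'.Sat v (aboveFormula Pp Pm M u) ↔ ModalArrow Pp Pm 0 M u M' v := by
  simp only [aboveFormula, sat_litConj_iff, modalArrow_zero_iff, Finset.mem_filter, and_imp]
  exact and_congr Iff.rfl (forall₂_congr fun p _ => not_imp_not)

lemma sat_notBelowFormula_iff {M' : KModel} {v : M'.W} :
    M'.Sat v (notBelowFormula Pp Pm M u) ↔ ¬ ModalArrow Pp Pm 0 M' v M u := by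
  simp only [notBelowFormula, KModel.Sat, sat_litConj_iff, modalArrow_zero_iff,
    Finset.mem_filter, and_imp]
  exact not_congr (and_comm.trans (and_congr (forall₂_congr fun p _ => not_imp_not) Iff.rfl))

end CharacteristicFormulas

theorem stmt4 (Pp Pm : Finset ℕ) (M0 M1 : KModel) (w0 : M0.W) (w1 : M1.W)
    (h0 : M0.Final w0) (h1 : M1.Final w1)
    (h : ModalArrow Pp Pm 1 M0 w0 M1 w1) :
    Matches Pp Pm M0 M1 (M0.cluster w0) (M1.cluster w1) := by
  constructor
  · rintro u0 ⟨hwu0, -⟩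
    have hdia : M0.Sat w0 (dia (aboveFormula Pp Pm M0 u0)) := fun hbox =>
      hbox u0 hwu0 (sat_aboveFormula_iff.2 (modalArrow_zero_refl Pp Pm M0 u0))
    have hdia' := h (dia _) (vpos_aboveFormula_subset ..) (vneg_aboveFormula_subset ..)
      (by simp [dia, depth, depth_aboveFormula]) hdia
    simp only [dia, KModel.Sat, not_forall, not_not] at hdia'
    obtain ⟨u1, hwu1, hu1⟩ := hdia'
    exact ⟨u1, ⟨hwu1, h1 u1 hwu1⟩, sat_aboveFormula_iff.1 hu1⟩
  · rintro u1 ⟨hwu1, -⟩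
    by_contra! hnone
    have hbox : M0.Sat w0 (box (notBelowFormula Pp Pm M1 u1)) := fun y hwy =>
      sat_notBelowFormula_iff.2 (hnone y ⟨hwy, h0 y hwy⟩)
    have hbox' := h (box _) (vpos_notBelowFormula_subset ..) (vneg_notBelowFormula_subset ..)
      (by simp [depth, depth_notBelowFormula]) hbox
    exact sat_notBelowFormula_iff.1 (hbox' u1 hwu1) (modalArrow_zero_refl Pp Pm M1 u1)
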